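/- arXiv:2406.17242 — 3 statements merged into one kernel-verified Lean document; each statement's English description precedes it below -/
import Mathlib

section
/- As τ → 0⁺, the delay exponential function dexp(-μt; -μτ) converges pointwise to the ordinary exponential exp(-μt) for each fixed t ≥ 0. -/
open Real Set Filter

noncomputable def dexp (μ τ t : ℝ) : ℝ :=
  ∑' n : ℕ, (-μ) ^ n * (t - n * τ) ^ n / (Nat.factorial n) * (if (n : ℝ) * τ ≤ t then 1 else 0)

/-- As `τ → 0⁺`, `dexp(-μt; -μτ)` converges to `exp(-μt)` for each fixed `t ≥ 0`. -/
theorem dexp_tendsto_exp (μ t : ℝ) (hμ : 0 < μ) (ht : 0 ≤ t) :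
    Tendsto (fun τ : ℝ => dexp μ τ t) (nhdsWithin 0 (Ioi 0)) (nhds (Real.exp (-μ * t))) := by
  have hexp : Real.exp (-μ * t) = ∑' n : ℕ, (-μ) ^ n * t ^ n / (Nat.factorial n) := by
    rw [Real.exp_eq_exp_ℝ, NormedSpace.exp_eq_tsum_div]
    refine tsum_congr fun n => ?_
    rw [mul_pow]
  rw [hexp]
  unfold dexp
  refine tendsto_tsum_of_dominated_convergence
    (f := fun τ n => (-μ) ^ n * (t - n * τ) ^ n / (Nat.factorial n) *
      (if (n : ℝ) * τ ≤ t then 1 else 0))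
    (bound := fun n => (μ * t) ^ n / (Nat.factorial n))
    (Real.summable_pow_div_factorial (μ * t)) ?_ ?_
  · intro k
    rcases Nat.eq_zero_or_pos k with rfl | hk
    · simp [ht]
    · rcases eq_or_lt_of_le ht with rfl | htpos
      · -- t = 0 : eventually the indicator is 0, and the limit term is 0
        have hev : ∀ᶠ τ in nhdsWithin (0:ℝ) (Ioi 0),
            (-μ) ^ k * ((0:ℝ) - k * τ) ^ k / (Nat.factorial k) *
              (if (k : ℝ) * τ ≤ 0 then 1 else 0) = 0 := by
          filter_upwards [self_mem_nhdsWithin] with τ hτ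
          have : ¬ ((k : ℝ) * τ ≤ 0) := by
            push_neg
            exact mul_pos (by exact_mod_cast hk) hτ
          simp [this]
        refine Tendsto.congr' (hev.mono fun τ h => h.symm) ?_
        have : (-μ) ^ k * (0:ℝ) ^ k / (Nat.factorial k) = 0 := by
          simp [zero_pow hk.ne']
        rw [this]
        exact tendsto_const_nhds
      · -- t > 0 : eventually the indicator is 1
        have hev : ∀ᶠ τ in nhdsWithin (0:ℝ) (Ioi 0),
            (-μ) ^ k * (t - k * τ) ^ k / (Nat.factorial k) *
              (if (k : ℝ) * τ ≤ t then 1 else 0)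
            = (-μ) ^ k * (t - k * τ) ^ k / (Nat.factorial k) := by
          have hmem : Ioo (0:ℝ) (t / k) ∈ nhdsWithin (0:ℝ) (Ioi 0) :=
            Ioo_mem_nhdsGT_of_mem ⟨le_refl 0, by positivity⟩
          filter_upwards [hmem] with τ hτ
          have hle : (k : ℝ) * τ ≤ t := by
            rw [mul_comm]
            have := (lt_div_iff₀ (by exact_mod_cast hk : (0:ℝ) < k)).mp hτ.2
            linarith
          simp [hle]
        refine Tendsto.congr' (hev.mono fun τ h => h.symm) ?_
        have hc : Tendsto (fun τ : ℝ => (-μ) ^ k * (t - k * τ) ^ k / (Nat.factorial k))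
            (nhds 0) (nhds ((-μ) ^ k * t ^ k / (Nat.factorial k))) := by
          have : Continuous (fun τ : ℝ => (-μ) ^ k * (t - k * τ) ^ k / (Nat.factorial k)) := by
            continuity
          simpa using this.tendsto 0
        exact hc.mono_left nhdsWithin_le_nhds
  · filter_upwards [self_mem_nhdsWithin] with τ hτ k
    have hτ0 : (0:ℝ) < τ := hτ
    by_cases h : (k : ℝ) * τ ≤ t
    · have habs : |t - k * τ| ≤ t := by
        rw [abs_le]
        constructor
        · nlinarith [mul_nonneg (Nat.cast_nonneg k : (0:ℝ) ≤ k) hτ0.le]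
        · nlinarith [mul_nonneg (Nat.cast_nonneg k : (0:ℝ) ≤ k) hτ0.le]
      have : ‖(-μ) ^ k * (t - k * τ) ^ k / (Nat.factorial k) * (if (k : ℝ) * τ ≤ t then 1 else 0)‖
          = μ ^ k * |t - k * τ| ^ k / (Nat.factorial k) := by
        rw [if_pos h, mul_one]
        rw [norm_div, norm_mul, norm_pow, norm_pow, Real.norm_eq_abs, Real.norm_eq_abs,
          abs_neg, abs_of_pos hμ, Real.norm_natCast]
      rw [this, mul_pow]
      gcongr
    · rw [if_neg h, mul_zero, norm_zero]
      positivity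
end

section
/- The delay exponential function satisfies the delay differential equation d/dt dexp(-μt; -μτ) = -μ · dexp(-μ(t-τ); -μτ) for all t > 0 with t not an integer multiple of τ. -/
open Real Set

/-!
Between two consecutive multiples `N τ < t < (N + 1) τ` only the first `N + 1` Heaviside factors
are switched on, so near `t` the delay exponential is the polynomial `∑_{n ≤ N} (-μ)ⁿ (s - nτ)ⁿ / n!`.
Differentiating term by term, the `n = 0` term is constant and the `(n + 1)`-st term has derivative
`-μ` times the `n`-th term evaluated at `s - τ`; the resulting sum over `n < N` is `dexp` at `t - τ`,
because `(N - 1) τ < t - τ < N τ`.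
-/

open Finset

noncomputable def dexpTerm (μ τ : ℝ) (n : ℕ) (s : ℝ) : ℝ :=
  (-μ) ^ n * (s - n * τ) ^ n / (Nat.factorial n)

theorem dexp_eq_sum_range {μ τ s : ℝ} {N : ℕ} (hτ : 0 ≤ τ)
    (hlo : ∀ n < N, (n : ℝ) * τ ≤ s) (hhi : s < N * τ) :
    dexp μ τ s = ∑ n ∈ range N, dexpTerm μ τ n s := by
  unfold dexp
  rw [tsum_eq_sum (s := range N)]
  · refine sum_congr rfl fun n hn => ?_
    simp [dexpTerm, hlo n (mem_range.mp hn)]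
  · intro n hn
    have hNn : (N : ℝ) ≤ n := by exact_mod_cast not_lt.mp (mt mem_range.mpr hn)
    have : s < n * τ := hhi.trans_le (mul_le_mul_of_nonneg_right hNn hτ)
    simp [not_le.mpr this]

theorem dexpTerm_zero (μ τ s : ℝ) : dexpTerm μ τ 0 s = 1 := by
  simp [dexpTerm]

theorem hasDerivAt_dexpTerm_succ (μ τ : ℝ) (n : ℕ) (s : ℝ) :
    HasDerivAt (dexpTerm μ τ (n + 1)) (-μ * dexpTerm μ τ n (s - τ)) s := by
  have hpow : HasDerivAt (fun x : ℝ => (x - (n + 1 : ℕ) * τ) ^ (n + 1))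
      ((n + 1 : ℕ) * (s - (n + 1 : ℕ) * τ) ^ n) s := by
    simpa using ((hasDerivAt_id s).sub_const ((n + 1 : ℕ) * τ)).fun_pow (n + 1)
  refine ((hpow.const_mul ((-μ) ^ (n + 1))).div_const ((n + 1).factorial : ℝ)).congr_deriv ?_
  have hfac : ((n + 1).factorial : ℝ) = (n + 1) * n.factorial := by
    push_cast [Nat.factorial_succ]; ring
  have hn : (n.factorial : ℝ) ≠ 0 := by positivity
  simp only [dexpTerm, hfac]
  push_cast
  field_simp
  ring

theorem hasDerivAt_sum_range_succ_dexpTerm (μ τ : ℝ) (N : ℕ) (t : ℝ) :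
    HasDerivAt (fun s => ∑ n ∈ range (N + 1), dexpTerm μ τ n s)
      (-μ * ∑ n ∈ range N, dexpTerm μ τ n (t - τ)) t := by
  simp only [sum_range_succ' _ N, dexpTerm_zero, mul_sum]
  exact (HasDerivAt.fun_sum fun n _ => hasDerivAt_dexpTerm_succ μ τ n t).add_const 1

theorem dexp_hasDerivAt_general (μ τ : ℝ) (hτ : 0 < τ) (t : ℝ) (ht : 0 < t)
    (hmult : ∀ n : ℕ, t ≠ n * τ) :
    HasDerivAt (fun s => dexp μ τ s) (-μ * dexp μ τ (t - τ)) t := by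
  set N := ⌊t / τ⌋₊
  have hlo : (N : ℝ) * τ < t := by
    refine lt_of_le_of_ne ?_ (hmult N).symm
    exact (le_div_iff₀ hτ).mp (Nat.floor_le (by positivity))
  have hhi : t < (N + 1) * τ := (div_lt_iff₀ hτ).mp (Nat.lt_floor_add_one (t / τ))
  have hnear : (fun s => dexp μ τ s) =ᶠ[nhds t]
      fun s => ∑ n ∈ range (N + 1), dexpTerm μ τ n s := by
    filter_upwards [Ioo_mem_nhds hlo hhi] with s hs
    refine dexp_eq_sum_range hτ.le (fun n hn => ?_) (by exact_mod_cast hs.2)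
    have hnN : (n : ℝ) ≤ N := by exact_mod_cast Nat.lt_succ_iff.mp hn
    nlinarith [hs.1]
  have hdelay : dexp μ τ (t - τ) = ∑ n ∈ range N, dexpTerm μ τ n (t - τ) := by
    refine dexp_eq_sum_range hτ.le (fun n hn => ?_) (by linarith)
    have hnN : (n : ℝ) + 1 ≤ N := by exact_mod_cast hn
    nlinarith
  rw [hdelay]
  exact (hasDerivAt_sum_range_succ_dexpTerm μ τ N t).congr_of_eventuallyEq hnear

/-- The delay exponential satisfies the delay differential equation
`d/dt dexp(-μt; -μτ) = -μ · dexp(-μ(t-τ); -μτ)` for all `t > 0` that are not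
integer multiples of `τ`. -/
theorem dexp_hasDerivAt (μ τ : ℝ) (hμ : 0 < μ) (hτ : 0 < τ) (t : ℝ) (ht : 0 < t)
    (hmult : ∀ n : ℕ, t ≠ n * τ) :
    HasDerivAt (fun s => dexp μ τ s) (-μ * dexp μ τ (t - τ)) t :=
  dexp_hasDerivAt_general μ τ hτ t ht hmult
end

section
/- If 0 < μτ < 1/e, then t ↦ dexp(-μt; -μτ) is monotonically non-increasing on [0, ∞), and more generally (-1)^m d^m/dt^m dexp(-μt; -μτ) = μ^m dexp(-μ(t - mτ); -μτ) ≥ 0 for all m ≥ 0 and t where the derivative exists. -/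
open Real Set

/-! On `[kτ, (k+1)τ]` the series defining `x = dexp μ τ` reduces to its first `k + 1` terms, and
differentiating these termwise gives the delay equation `x' t = -μ x (t - τ)` off the grid
`τℕ`; iterating it yields the formula for the higher derivatives.

For positivity put `a = τ⁻¹`, so that `μ e^{aτ} = μ e ≤ a`, and `u t = e^{at} x t`. Then
`u' t = a u t - μ e^{aτ} u (t - τ)`. If `u` is monotone on `[0, kτ]`, the lag term is at most
`a u (kτ)` on the next interval, so `(u - u (kτ))' ≥ a (u - u (kτ))` there, which forces
`u ≥ u (kτ)`, and then `u' ≥ 0`. Hence `u` is monotone on `[0, ∞)`, `x t ≥ e^{-at} > 0`, and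
`x' = -μ x (· - τ) ≤ 0` makes `x` antitone. -/

open Finset in
noncomputable def dexpPoly (μ τ : ℝ) (k : ℕ) (t : ℝ) : ℝ :=
  ∑ n ∈ range k, (-μ) ^ n * (t - n * τ) ^ n / (Nat.factorial n)

lemma monotoneOn_Icc_of_hasDerivAt_nonneg {f f' : ℝ → ℝ} {a b : ℝ}
    (hf : ContinuousOn f (Icc a b)) (hf' : ∀ x ∈ Ioo a b, HasDerivAt f (f' x) x)
    (hf'₀ : ∀ x ∈ Ioo a b, 0 ≤ f' x) : MonotoneOn f (Icc a b) :=
  monotoneOn_of_hasDerivWithinAt_nonneg (convex_Icc a b) hf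
    (by simpa only [interior_Icc] using fun x hx => (hf' x hx).hasDerivWithinAt)
    (by simpa only [interior_Icc] using hf'₀)

lemma nonneg_of_mul_le_deriv {v v' : ℝ → ℝ} {a b r : ℝ}
    (hv : ContinuousOn v (Icc a b)) (hv' : ∀ x ∈ Ioo a b, HasDerivAt v (v' x) x)
    (hle : ∀ x ∈ Ioo a b, r * v x ≤ v' x) (ha : 0 ≤ v a) {t : ℝ} (ht : t ∈ Icc a b) :
    0 ≤ v t := by
  have hmono : MonotoneOn (fun s => exp (-(r * s)) * v s) (Icc a b) := by
    refine monotoneOn_Icc_of_hasDerivAt_nonneg (f' := fun x => exp (-(r * x)) * (v' x - r * v x))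
      (by fun_prop) (fun x hx => ?_) (fun x hx => ?_)
    · refine ((((hasDerivAt_id x).const_mul r).neg.exp).mul (hv' x hx)).congr_deriv ?_
      simp only [id, Pi.neg_apply]
      ring
    · exact mul_nonneg (exp_pos _).le (sub_nonneg.mpr (hle x hx))
  have := hmono (left_mem_Icc.mpr (ht.1.trans ht.2)) ht ht.1
  simp only at this
  nlinarith [exp_pos (-(r * a)), exp_pos (-(r * t))]

lemma monotoneOn_Ici_of_monotoneOn_Icc_mul {β : Type*} [Preorder β] {f : ℝ → β} {τ : ℝ}
    (hτ : 0 < τ)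
    (hstep : ∀ k : ℕ, MonotoneOn f (Icc 0 (k * τ)) → MonotoneOn f (Icc (k * τ) ((k + 1) * τ))) :
    MonotoneOn f (Ici 0) := by
  have hIcc : ∀ k : ℕ, MonotoneOn f (Icc 0 (k * τ)) := by
    intro k
    induction k with
    | zero => simp
    | succ k ih =>
      have h0k : (0 : ℝ) ≤ k * τ := by positivity
      have hk : (k : ℝ) * τ ≤ (k + 1) * τ := by nlinarith
      have := ih.union_right (hstep k ih) (isGreatest_Icc h0k) (isLeast_Icc hk)
      rwa [Icc_union_Icc_eq_Icc h0k hk, ← Nat.cast_succ] at this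
  intro s hs t ht hst
  obtain ⟨k, hk⟩ := exists_nat_ge (t / τ)
  have htk : t ≤ k * τ := (div_le_iff₀ hτ).mp hk
  exact hIcc k ⟨hs, hst.trans htk⟩ ⟨ht, htk⟩ hst

section

variable {μ τ : ℝ}

-- `k * τ ≤ t + τ` stands for `(k - 1) * τ ≤ t`, which avoids truncated subtraction at `k = 0`
lemma dexp_eq_dexpPoly (hτ : 0 < τ) {k : ℕ} {t : ℝ} (hlo : k * τ ≤ t + τ) (hhi : t < k * τ) :
    dexp μ τ t = dexpPoly μ τ k t := by
  rw [dexp, tsum_eq_sum (s := Finset.range k), dexpPoly]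
  · refine Finset.sum_congr rfl fun n hn => ?_
    have : (n + 1 : ℝ) ≤ k := by exact_mod_cast Finset.mem_range.mp hn
    rw [if_pos (by nlinarith), mul_one]
  · intro n hn
    have : (k : ℝ) ≤ n := by exact_mod_cast not_lt.mp (Finset.mem_range.not.mp hn)
    rw [if_neg (by nlinarith), mul_zero]

lemma dexp_of_neg (hτ : 0 < τ) {t : ℝ} (ht : t < 0) : dexp μ τ t = 0 := by
  have : ∀ n : ℕ, ¬ (n : ℝ) * τ ≤ t := fun n => by
    have : (0 : ℝ) ≤ n * τ := by positivity
    linarith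
  simp [dexp, this]

lemma dexp_eq_dexpPoly_succ (hτ : 0 < τ) {k : ℕ} {t : ℝ} (ht : t ∈ Icc (k * τ) ((k + 1) * τ)) :
    dexp μ τ t = dexpPoly μ τ (k + 1) t := by
  rcases ht.2.lt_or_eq with hlt | rfl
  · exact dexp_eq_dexpPoly hτ (by push_cast; linarith [ht.1]) (by push_cast; exact hlt)
  -- at the right endpoint the extra term `(t - (k + 1) τ) ^ (k + 1)` of `dexpPoly (k + 2)` vanishes
  · rw [dexp_eq_dexpPoly (k := k + 2) hτ (by push_cast; linarith) (by push_cast; linarith),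
      dexpPoly, Finset.sum_range_succ, ← dexpPoly]
    simp

lemma dexp_zero (hτ : 0 < τ) : dexp μ τ 0 = 1 := by
  rw [dexp_eq_dexpPoly_succ (k := 0) hτ (by simp [hτ.le])]
  simp [dexpPoly]

lemma continuous_dexpPoly (μ τ : ℝ) (k : ℕ) : Continuous (dexpPoly μ τ k) := by
  unfold dexpPoly
  fun_prop

lemma continuousOn_dexp_Icc (hτ : 0 < τ) (k : ℕ) :
    ContinuousOn (dexp μ τ) (Icc (k * τ) ((k + 1) * τ)) :=
  (continuous_dexpPoly μ τ (k + 1)).continuousOn.congr fun _ ht => dexp_eq_dexpPoly_succ hτ ht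

lemma hasDerivAt_dexpPoly_succ (μ τ : ℝ) (k : ℕ) (t : ℝ) :
    HasDerivAt (dexpPoly μ τ (k + 1)) (-μ * dexpPoly μ τ k (t - τ)) t := by
  have hterm : ∀ n ∈ Finset.range k,
      HasDerivAt (fun s => (-μ) ^ (n + 1) * (s - (n + 1 : ℕ) * τ) ^ (n + 1) / (n + 1).factorial)
        (-μ * ((-μ) ^ n * (t - τ - n * τ) ^ n / n.factorial)) t := by
    intro n _
    have := (((hasDerivAt_pow (n + 1) _).comp_sub_const t ((n + 1 : ℕ) * τ)).const_mul
      ((-μ) ^ (n + 1))).div_const ((n + 1).factorial : ℝ)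
    refine this.congr_deriv ?_
    rw [Nat.factorial_succ]
    push_cast
    field_simp
    ring
  have hsplit : dexpPoly μ τ (k + 1) = fun s => ∑ n ∈ Finset.range k,
      (-μ) ^ (n + 1) * (s - (n + 1 : ℕ) * τ) ^ (n + 1) / (n + 1).factorial + 1 := by
    funext s
    simp [dexpPoly, Finset.sum_range_succ']
  rw [hsplit, dexpPoly, Finset.mul_sum]
  exact (HasDerivAt.fun_sum hterm).add_const 1

lemma hasDerivAt_dexp_of_mem_Ioo (hτ : 0 < τ) {k : ℕ} {t : ℝ}
    (ht : t ∈ Ioo (k * τ) ((k + 1) * τ)) :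
    HasDerivAt (dexp μ τ) (-μ * dexp μ τ (t - τ)) t := by
  have hlag : dexp μ τ (t - τ) = dexpPoly μ τ k (t - τ) :=
    dexp_eq_dexpPoly hτ (by linarith [ht.1]) (by linarith [ht.2])
  rw [hlag]
  exact (hasDerivAt_dexpPoly_succ μ τ k t).congr_of_eventuallyEq <|
    Filter.eventually_of_mem (Ioo_mem_nhds ht.1 ht.2) fun s hs =>
      dexp_eq_dexpPoly_succ hτ (Ioo_subset_Icc_self hs)

lemma hasDerivAt_dexp (hτ : 0 < τ) {t : ℝ} (ht : ∀ n : ℕ, t ≠ n * τ) :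
    HasDerivAt (dexp μ τ) (-μ * dexp μ τ (t - τ)) t := by
  rcases lt_or_ge t 0 with hneg | hnonneg
  · rw [dexp_of_neg hτ (by linarith), mul_zero]
    exact (hasDerivAt_const t 0).congr_of_eventuallyEq <|
      Filter.eventually_of_mem (Iio_mem_nhds hneg) fun s hs => dexp_of_neg hτ hs
  · set k := ⌊t / τ⌋₊
    have hlo : k * τ ≤ t := (le_div_iff₀ hτ).mp (Nat.floor_le (by positivity))
    have hhi : t < (k + 1) * τ := (div_lt_iff₀ hτ).mp (Nat.lt_floor_add_one _)
    exact hasDerivAt_dexp_of_mem_Ioo hτ ⟨hlo.lt_of_ne (ht k).symm, hhi⟩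

lemma isClosed_range_natCast_mul (hτ : 0 < τ) : IsClosed (range fun n : ℕ => (n : ℝ) * τ) := by
  have := (Homeomorph.mulRight₀ τ hτ.ne').isClosedMap _
    Nat.isClosedEmbedding_coe_real.isClosed_range
  rwa [← range_comp] at this

lemma iteratedDeriv_dexp (hτ : 0 < τ) (m : ℕ) {t : ℝ} (ht : ∀ n : ℕ, t ≠ n * τ) :
    iteratedDeriv m (dexp μ τ) t = (-μ) ^ m * dexp μ τ (t - m * τ) := by
  induction m generalizing t with
  | zero => simp
  | succ m ih =>
    have hnear : iteratedDeriv m (dexp μ τ) =ᶠ[nhds t]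
        fun s => (-μ) ^ m * dexp μ τ (s - m * τ) := by
      filter_upwards [(isClosed_range_natCast_mul hτ).isOpen_compl.mem_nhds
        fun ⟨n, hn⟩ => ht n hn.symm] with s hs
      exact ih fun n hn => hs ⟨n, hn.symm⟩
    have hshift : ∀ n : ℕ, t - m * τ ≠ n * τ := fun n h => ht (n + m) (by push_cast; linarith)
    rw [iteratedDeriv_succ, hnear.deriv_eq,
      (((hasDerivAt_dexp hτ hshift).comp_sub_const t (m * τ)).const_mul ((-μ) ^ m)).deriv]
    push_cast
    ring_nf

lemma monotoneOn_exp_mul_dexp_Icc (hμ : 0 ≤ μ) (hτ : 0 < τ) {a : ℝ} (ha : μ * exp (a * τ) ≤ a)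
    (k : ℕ) (hprev : MonotoneOn (fun t => exp (a * t) * dexp μ τ t) (Icc 0 (k * τ))) :
    MonotoneOn (fun t => exp (a * t) * dexp μ τ t) (Icc (k * τ) ((k + 1) * τ)) := by
  set u := fun t => exp (a * t) * dexp μ τ t
  set c := u (k * τ)
  have hK : (0 : ℝ) ≤ k * τ := by positivity
  have ha₀ : 0 ≤ a := le_trans (by positivity) ha
  have hb₀ : 0 ≤ μ * exp (a * τ) := by positivity
  have hu₀ : u 0 = 1 := by simp [u, dexp_zero hτ]
  have hc : 1 ≤ c := hu₀ ▸ hprev (left_mem_Icc.mpr hK) (right_mem_Icc.mpr hK) hK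
  have hlag : ∀ x ∈ Ioo (k * τ) ((k + 1) * τ), 0 ≤ u (x - τ) ∧ u (x - τ) ≤ c := by
    intro x hx
    rcases lt_or_ge (x - τ) 0 with hneg | hnonneg
    · simp only [u, dexp_of_neg hτ hneg, mul_zero]
      exact ⟨le_rfl, by linarith⟩
    · have hmem : x - τ ∈ Icc 0 (k * τ) := ⟨hnonneg, by linarith [hx.2]⟩
      have h₁ := hu₀ ▸ hprev (left_mem_Icc.mpr hK) hmem hnonneg
      exact ⟨by linarith, hprev hmem (right_mem_Icc.mpr hK) hmem.2⟩
  have hderiv : ∀ x ∈ Ioo (k * τ) ((k + 1) * τ),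
      HasDerivAt u (a * u x - μ * exp (a * τ) * u (x - τ)) x := by
    intro x hx
    refine (((hasDerivAt_id x).const_mul a).exp.mul
      (hasDerivAt_dexp_of_mem_Ioo hτ hx)).congr_deriv ?_
    simp only [u, id]
    rw [show a * x = a * τ + a * (x - τ) by ring, exp_add]
    ring
  have hcont : ContinuousOn u (Icc (k * τ) ((k + 1) * τ)) :=
    (continuous_exp.comp (continuous_const_mul a)).continuousOn.mul (continuousOn_dexp_Icc hτ k)
  have hlow : ∀ t ∈ Icc (k * τ) ((k + 1) * τ), c ≤ u t := fun t ht => sub_nonneg.mp <|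
    nonneg_of_mul_le_deriv (v := fun s => u s - c) (r := a) (hcont.sub continuousOn_const)
      (fun x hx => (hderiv x hx).sub_const c)
      (fun x hx => by
        obtain ⟨h₀, h₁⟩ := hlag x hx
        nlinarith [mul_le_mul_of_nonneg_left h₁ hb₀,
          mul_le_mul_of_nonneg_right ha (by linarith : 0 ≤ c)])
      (by simp [c]) ht
  refine monotoneOn_Icc_of_hasDerivAt_nonneg hcont hderiv fun x hx => ?_
  obtain ⟨h₀, h₁⟩ := hlag x hx
  nlinarith [mul_le_mul_of_nonneg_left h₁ hb₀, mul_le_mul_of_nonneg_right ha (by linarith : 0 ≤ c),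
    mul_le_mul_of_nonneg_left (hlow x (Ioo_subset_Icc_self hx)) ha₀]

lemma monotoneOn_exp_mul_dexp (hμ : 0 ≤ μ) (hτ : 0 < τ) {a : ℝ} (ha : μ * exp (a * τ) ≤ a) :
    MonotoneOn (fun t => exp (a * t) * dexp μ τ t) (Ici 0) :=
  monotoneOn_Ici_of_monotoneOn_Icc_mul hτ (monotoneOn_exp_mul_dexp_Icc hμ hτ ha)

lemma dexp_pos (hμ : 0 ≤ μ) (hτ : 0 < τ) (hμτ : μ * τ ≤ (exp 1)⁻¹) {t : ℝ} (ht : 0 ≤ t) :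
    0 < dexp μ τ t := by
  have ha : μ * exp (τ⁻¹ * τ) ≤ τ⁻¹ := by
    calc μ * exp (τ⁻¹ * τ) = μ * τ * exp 1 * τ⁻¹ := by field_simp
      _ ≤ (exp 1)⁻¹ * exp 1 * τ⁻¹ := by gcongr
      _ = τ⁻¹ := by field_simp
  have h₁ := monotoneOn_exp_mul_dexp hμ hτ ha (mem_Ici.mpr le_rfl) ht ht
  simp only [mul_zero, exp_zero, one_mul, dexp_zero hτ] at h₁
  exact pos_of_mul_pos_right (one_pos.trans_le h₁) (exp_pos _).le

lemma dexp_nonneg (hμ : 0 ≤ μ) (hτ : 0 < τ) (hμτ : μ * τ ≤ (exp 1)⁻¹) (t : ℝ) :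
    0 ≤ dexp μ τ t := by
  rcases lt_or_ge t 0 with hneg | hnonneg
  · exact (dexp_of_neg hτ hneg).ge
  · exact (dexp_pos hμ hτ hμτ hnonneg).le

lemma antitoneOn_dexp (hμ : 0 ≤ μ) (hτ : 0 < τ) (hμτ : μ * τ ≤ (exp 1)⁻¹) :
    AntitoneOn (dexp μ τ) (Ici 0) := by
  rw [← monotoneOn_toDual_comp_iff]
  refine monotoneOn_Ici_of_monotoneOn_Icc_mul hτ fun k _ => monotoneOn_toDual_comp_iff.mpr ?_
  refine antitoneOn_of_hasDerivWithinAt_nonpos (convex_Icc _ _) (continuousOn_dexp_Icc hτ k)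
    (by simpa only [interior_Icc] using
      fun x hx => (hasDerivAt_dexp_of_mem_Ioo (μ := μ) hτ hx).hasDerivWithinAt) fun x _ => ?_
  nlinarith [dexp_nonneg hμ hτ hμτ (x - τ)]

end

/-- If `0 < μτ < 1/e`, then `dexp(-μ·; -μτ)` is monotonically non-increasing on `[0, ∞)`,
and `(-1)^m dᵐ/dtᵐ dexp(-μt; -μτ) = μ^m dexp(-μ(t - mτ); -μτ) ≥ 0` at every point `t`
where the derivatives exist (i.e. away from the integer multiples of `τ`). -/
theorem dexp_antitone_and_completely_monotone (μ τ : ℝ) (hμ : 0 < μ) (hτ : 0 < τ)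
    (hμτ : μ * τ < (Real.exp 1)⁻¹) :
    AntitoneOn (fun t => dexp μ τ t) (Ici 0) ∧
    (∀ (m : ℕ) (t : ℝ), (∀ n : ℕ, t ≠ n * τ) →
      (-1 : ℝ) ^ m * iteratedDeriv m (fun t => dexp μ τ t) t
          = μ ^ m * dexp μ τ (t - m * τ) ∧
      0 ≤ (-1 : ℝ) ^ m * iteratedDeriv m (fun t => dexp μ τ t) t) := by
  refine ⟨antitoneOn_dexp hμ.le hτ hμτ.le, fun m t ht => ?_⟩
  have hderiv : (-1 : ℝ) ^ m * iteratedDeriv m (dexp μ τ) t = μ ^ m * dexp μ τ (t - m * τ) := by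
    rw [iteratedDeriv_dexp hτ m ht, ← mul_assoc, ← mul_pow, neg_one_mul, neg_neg]
  exact ⟨hderiv, hderiv ▸ mul_nonneg (pow_nonneg hμ.le m) (dexp_nonneg hμ.le hτ hμτ.le _)⟩
end
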